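/- arXiv:math/0503563 — 8 statements merged into one kernel-verified Lean document; each statement's English description precedes it below -/
import Mathlib

section
/- Every subalgebra of the polynomial ring K[x] in one variable over a field K is finitely generated as a K-algebra. -/
set_option maxHeartbeats 1000000 in

/-- Every subalgebra of the polynomial ring `K[x]` in one variable over a field `K`
is finitely generated as a `K`-algebra. -/
theorem every_subalgebra_of_polynomial_ring_fg (K : Type*) [Field K]
    (B : Subalgebra K (Polynomial K)) : B.FG := by
  classical
  by_cases hdeg : ∀ p ∈ B, p.natDegree = 0
  · have hB : B = ⊥ := by
      refine le_antisymm (fun p hp => ?_) bot_le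
      obtain ⟨a, ha⟩ := Polynomial.natDegree_eq_zero.mp (hdeg p hp)
      rw [Algebra.mem_bot]
      exact ⟨a, ha⟩
    rw [hB]
    exact Subalgebra.fg_bot
  · push_neg at hdeg
    obtain ⟨f₀, hf₀B, hf₀⟩ := hdeg
    have hf₀ne : f₀ ≠ 0 := fun h => hf₀ (by simp [h])
    set f : Polynomial K := f₀ * Polynomial.C f₀.leadingCoeff⁻¹ with hfdef
    have hfmonic : f.Monic := Polynomial.monic_mul_leadingCoeff_inv hf₀ne
    have hfdegne : f.natDegree ≠ 0 := by
      rwa [hfdef, Polynomial.natDegree_mul_C (inv_ne_zero (Polynomial.leadingCoeff_ne_zero.mpr hf₀ne))]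
    have hfB : f ∈ B := B.mul_mem hf₀B (B.algebraMap_mem f₀.leadingCoeff⁻¹)
    set A : Subalgebra K (Polynomial K) := Algebra.adjoin K ({f} : Set (Polynomial K)) with hAdef
    have hAB : A ≤ B := Algebra.adjoin_le (by simpa using hfB)
    have hfA : f ∈ A := Algebra.self_mem_adjoin_singleton K f
    haveI : Algebra.FiniteType K A := (Subalgebra.fg_iff_finiteType A).mp ⟨{f}, by simp [hAdef]⟩
    haveI : IsNoetherianRing A := Algebra.FiniteType.isNoetherianRing K A
    -- X is integral over A
    have hX : IsIntegral A (Polynomial.X : Polynomial K) := by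
      refine ⟨f.map (algebraMap K A) - Polynomial.C ⟨f, hfA⟩, ?_, ?_⟩
      · refine Polynomial.Monic.sub_of_left (hfmonic.map _) ?_
        refine lt_of_le_of_lt Polynomial.degree_C_le ?_
        rw [← Polynomial.natDegree_pos_iff_degree_pos,
          Polynomial.natDegree_map_eq_of_injective (RingHom.injective _)]
        omega
      · rw [← Polynomial.aeval_def, map_sub, Polynomial.aeval_map_algebraMap,
          Polynomial.aeval_X_left_apply, Polynomial.aeval_C]
        show f - f = 0
        simp
    haveI hfin : Module.Finite A (Polynomial K) := by
      have h1 : Algebra.adjoin A ({Polynomial.X} : Set (Polynomial K)) = ⊤ := by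
        rw [eq_top_iff]
        intro p _
        have h2 : (⊤ : Subalgebra K (Polynomial K)) ≤
            Subalgebra.restrictScalars K (Algebra.adjoin A ({Polynomial.X} : Set (Polynomial K))) := by
          rw [← Polynomial.adjoin_X]
          exact Algebra.adjoin_le fun y hy => Algebra.subset_adjoin hy
        exact h2 trivial
      constructor
      have hfg := hX.fg_adjoin_singleton
      rwa [h1, Algebra.top_toSubmodule] at hfg
    -- B as an A-submodule of K[x]
    let M : Submodule A (Polynomial K) :=
      { carrier := B
        add_mem' := fun ha hb => B.add_mem ha hb
        zero_mem' := B.zero_mem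
        smul_mem' := fun a p hp => by
          have ha : (a : Polynomial K) ∈ B := hAB a.2
          rw [Algebra.smul_def]
          exact B.mul_mem ha hp }
    obtain ⟨t, ht⟩ := IsNoetherian.noetherian M
    refine ⟨insert f t, le_antisymm (Algebra.adjoin_le ?_) ?_⟩
    · intro y hy
      rcases Finset.mem_insert.mp (by exact_mod_cast hy) with h | h
      · exact h ▸ hfB
      · have hy' : y ∈ Submodule.span A ((t : Set (Polynomial K))) :=
          Submodule.subset_span (by exact_mod_cast h)
        rw [ht] at hy'
        exact hy'
    · intro p hp
      have hp' : p ∈ Submodule.span A ((t : Set (Polynomial K))) := by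
        rw [ht]; exact hp
      clear hp
      induction hp' using Submodule.span_induction with
      | mem x hx =>
          exact Algebra.subset_adjoin (by exact_mod_cast Finset.mem_insert_of_mem (by exact_mod_cast hx))
      | zero => exact Subalgebra.zero_mem _
      | add x y _ _ hx hy => exact Subalgebra.add_mem _ hx hy
      | smul a x _ hx =>
          rw [Algebra.smul_def]
          have ha : (a : Polynomial K) ∈ Algebra.adjoin K ((insert f t : Finset (Polynomial K)) : Set (Polynomial K)) := by
            refine Algebra.adjoin_mono ?_ a.2
            simp
          exact Subalgebra.mul_mem _ ha hx
end

section
/- Every additive subsemigroup of the natural numbers is finitely generated. -/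
/-- Every additive subsemigroup of the natural numbers is finitely generated:
there is a finite subset whose generated subsemigroup is the whole subsemigroup. -/
theorem addSubsemigroup_nat_fg (L : AddSubsemigroup ℕ) :
    ∃ S : Finset ℕ, AddSubsemigroup.closure (S : Set ℕ) = L := by
  by_cases hpos : ∃ a, a ∈ L ∧ 0 < a
  · obtain ⟨a, haL, ha⟩ := hpos
    classical
    set f : ℕ → ℕ := fun r => if h : ∃ n, n ∈ L ∧ n % a = r then Nat.find h else a with hf
    have hfL : ∀ r, f r ∈ L := by
      intro r
      by_cases h : ∃ n, n ∈ L ∧ n % a = r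
      · simp only [hf]; rw [dif_pos h]; exact (Nat.find_spec h).1
      · simp only [hf]; rw [dif_neg h]; exact haL
    refine ⟨insert a ((Finset.range a).image f), ?_⟩
    apply le_antisymm
    · rw [AddSubsemigroup.closure_le]
      intro x hx
      simp only [Finset.coe_insert, Finset.coe_image, Set.mem_insert_iff] at hx
      rcases hx with rfl | ⟨r, _, rfl⟩
      · exact haL
      · exact hfL r
    · intro x hx
      have hex : ∃ n, n ∈ L ∧ n % a = x % a := ⟨x, hx, rfl⟩
      set m := Nat.find hex with hm
      have hmL : m ∈ L := (Nat.find_spec hex).1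
      have hmmod : m % a = x % a := (Nat.find_spec hex).2
      have hmle : m ≤ x := Nat.find_min' hex ⟨hx, rfl⟩
      have hmS : m ∈ (insert a ((Finset.range a).image f) : Finset ℕ) := by
        apply Finset.mem_insert_of_mem
        apply Finset.mem_image.2
        refine ⟨x % a, Finset.mem_range.2 (Nat.mod_lt _ ha), ?_⟩
        simp only [hf]
        rw [dif_pos hex]
      have haS : a ∈ (insert a ((Finset.range a).image f) : Finset ℕ) :=
        Finset.mem_insert_self _ _
      have hdvd : a ∣ x - m := (Nat.modEq_iff_dvd' hmle).1 hmmod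
      obtain ⟨k, hk⟩ := hdvd
      have hxk : x = m + a * k := by omega
      rw [hxk]
      clear hxk hk hx hmmod hmle
      induction k with
      | zero =>
        simp only [Nat.mul_zero, Nat.add_zero]
        exact AddSubsemigroup.subset_closure (Finset.mem_coe.2 hmS)
      | succ n ih =>
        have : m + a * (n + 1) = (m + a * n) + a := by ring
        rw [this]
        exact AddSubsemigroup.add_mem _ ih (AddSubsemigroup.subset_closure (Finset.mem_coe.2 haS))
  · push_neg at hpos
    by_cases h0 : (0 : ℕ) ∈ L
    · refine ⟨{0}, ?_⟩
      apply le_antisymm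
      · rw [AddSubsemigroup.closure_le]
        intro x hx
        simp only [Finset.coe_singleton, Set.mem_singleton_iff] at hx
        subst hx; exact h0
      · intro x hx
        have : x = 0 := by have := hpos x hx; omega
        subst this
        exact AddSubsemigroup.subset_closure (by simp)
    · refine ⟨∅, ?_⟩
      apply le_antisymm
      · rw [AddSubsemigroup.closure_le]; simp
      · intro x hx
        have : x = 0 := by have := hpos x hx; omega
        subst this
        exact absurd hx h0
end

section
/- Let A be a finitely generated commutative integral domain over a field K with Krull dimension at least 2, and let I be a prime ideal of A. If dim_K (A/I) is infinite and I/I^2 is infinite dimensional over K, then the subalgebra K + I of A (consisting of all elements of A congruent to a constant modulo I) is not a finitely generated K-algebra. -/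
/-- Let `A` be a finitely generated commutative integral domain over a field `K` with Krull
dimension at least 2, and `I` a nonzero finitely generated prime ideal of `A` such that `A/I`
is infinite-dimensional over `K` and `I/I²` is infinite-dimensional over `K` (expressed as:
no finite subset of `I` spans `I` over `K` together with `I²`).  Then the `K`-subalgebra
`K + I` (the subalgebra generated by `I`) is not finitely generated as a `K`-algebra. -/
theorem subalgebra_K_plus_I_not_fg {K A : Type*} [Field K] [CommRing A] [IsDomain A]
    [Algebra K A] (hFT : Algebra.FiniteType K A) (hdim : 2 ≤ ringKrullDim A)
    (I : Ideal A) (hIprime : I.IsPrime) (hIne : I ≠ ⊥) (hIfg : I.FG)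
    (hquot : ¬ Module.Finite K (A ⧸ I))
    (hcot : ∀ s : Finset A, (↑s : Set A) ⊆ (I : Set A) →
      ¬ (I : Set A) ⊆
        ↑(Submodule.restrictScalars K (I ^ 2 : Ideal A) ⊔ Submodule.span K (↑s : Set A))) :
    ¬ (Algebra.adjoin K (I : Set A)).FG := by
  rintro ⟨T, hT⟩
  -- every element of adjoin K I is a constant plus an element of I
  have hdec : ∀ x ∈ Algebra.adjoin K (I : Set A), ∃ c : K, x - algebraMap K A c ∈ I := by
    intro x hx
    induction hx using Algebra.adjoin_induction with
    | mem y hy => exact ⟨0, by simpa using hy⟩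
    | algebraMap r => exact ⟨r, by simp⟩
    | add y z hy hz ihy ihz =>
        obtain ⟨a, ha⟩ := ihy; obtain ⟨b, hb⟩ := ihz
        exact ⟨a + b, by rw [map_add]; convert I.add_mem ha hb using 1; ring⟩
    | mul y z hy hz ihy ihz =>
        obtain ⟨a, ha⟩ := ihy; obtain ⟨b, hb⟩ := ihz
        refine ⟨a * b, ?_⟩
        have : y * z - algebraMap K A (a * b)
            = y * (z - algebraMap K A b) + algebraMap K A b * (y - algebraMap K A a) := by
          rw [map_mul]; ring
        rw [this]
        exact I.add_mem (I.mul_mem_left _ hb) (I.mul_mem_left _ ha)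
  classical
  -- for each generator, choose its constant part
  have hTmem : ∀ t ∈ T, t ∈ Algebra.adjoin K (I : Set A) := fun t ht =>
    hT ▸ Algebra.subset_adjoin ht
  choose c hc using fun (t : A) (ht : t ∈ T) => hdec t (hTmem t ht)
  set f : A → A := fun t => if ht : t ∈ T then t - algebraMap K A (c t ht) else 0 with hf
  set s : Finset A := T.image f with hs
  have hsI : (↑s : Set A) ⊆ (I : Set A) := by
    intro x hx
    simp only [hs, Finset.coe_image, Set.mem_image, Finset.mem_coe] at hx
    obtain ⟨t, ht, rfl⟩ := hx
    simp only [hf, dif_pos ht]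
    exact hc t ht
  -- adjoin K I ≤ adjoin K s
  have hadj : Algebra.adjoin K (I : Set A) ≤ Algebra.adjoin K (↑s : Set A) := by
    rw [← hT]
    apply Algebra.adjoin_le
    intro t ht
    rw [Finset.mem_coe] at ht
    have hfs : f t ∈ Algebra.adjoin K (↑s : Set A) :=
      Algebra.subset_adjoin (by exact Finset.mem_coe.2 (Finset.mem_image_of_mem f ht))
    have : t = f t + algebraMap K A (c t ht) := by simp only [hf, dif_pos ht]; ring
    rw [this]
    exact add_mem hfs (Subalgebra.algebraMap_mem _ _)
  set N : Submodule K A :=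
    Submodule.restrictScalars K (I ^ 2 : Ideal A) ⊔ Submodule.span K (↑s : Set A) with hN
  have hNI : ∀ x ∈ N, x ∈ I := by
    intro x hx
    have : N ≤ Submodule.restrictScalars K (I.restrictScalars K) := by
      apply sup_le
      · intro y hy
        exact Ideal.pow_le_self two_ne_zero hy
      · rw [Submodule.span_le]
        exact hsI
    exact this hx
  -- every element of adjoin K s is constant plus element of N
  have key : ∀ x ∈ Algebra.adjoin K (↑s : Set A), ∃ c : K, x - algebraMap K A c ∈ N := by
    intro x hx
    induction hx using Algebra.adjoin_induction with
    | mem y hy =>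
        exact ⟨0, by simpa using Submodule.mem_sup_right (Submodule.subset_span hy)⟩
    | algebraMap r => exact ⟨r, by simp⟩
    | add y z hy hz ihy ihz =>
        obtain ⟨a, ha⟩ := ihy; obtain ⟨b, hb⟩ := ihz
        exact ⟨a + b, by rw [map_add]; convert N.add_mem ha hb using 1; ring⟩
    | mul y z hy hz ihy ihz =>
        obtain ⟨a, ha⟩ := ihy; obtain ⟨b, hb⟩ := ihz
        refine ⟨a * b, ?_⟩
        have heq : y * z - algebraMap K A (a * b)
            = (y - algebraMap K A a) * (z - algebraMap K A b)
              + a • (z - algebraMap K A b) + b • (y - algebraMap K A a) := by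
          rw [map_mul]
          simp only [Algebra.smul_def]
          ring
        rw [heq]
        refine N.add_mem (N.add_mem ?_ (N.smul_mem a hb)) (N.smul_mem b ha)
        apply Submodule.mem_sup_left
        have : (y - algebraMap K A a) * (z - algebraMap K A b) ∈ I * I :=
          Ideal.mul_mem_mul (hNI _ ha) (hNI _ hb)
        rwa [← pow_two] at this
  -- conclude
  apply hcot s hsI
  intro x hxI
  obtain ⟨d, hd⟩ := key x (hadj (Algebra.subset_adjoin hxI))
  have hdI : algebraMap K A d ∈ I := by
    have : algebraMap K A d = x - (x - algebraMap K A d) := by ring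
    rw [this]
    exact I.sub_mem hxI (hNI _ hd)
  have hd0 : d = 0 := by
    by_contra h
    exact hIprime.ne_top (I.eq_top_of_isUnit_mem hdI
      ((isUnit_map_iff _ _).2 (isUnit_iff_ne_zero.2 h)))
  rw [hd0, map_zero, sub_zero] at hd
  exact hd
end

section
/- Let A be a commutative K-algebra that is an integral domain, I a nonzero ideal of A, and suppose the K-vector space I/I^2 is infinite dimensional. Then the K-subalgebra B = K + I of A is not finitely generated as a K-algebra. -/
/-- Let `A` be a commutative `K`-algebra that is an integral domain, `I` a nonzero ideal of `A`,
and suppose `I/I²` is infinite-dimensional as a `K`-vector space (expressed as: no finite subset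
of `I` spans `I` over `K` together with `I²`).  Then the `K`-subalgebra `B = K + I` of `A`
(the subalgebra generated by `I`) is not finitely generated as a `K`-algebra. -/
theorem subalgebra_K_plus_I_not_fg_of_cotangent_infinite {K A : Type*} [Field K] [CommRing A]
    [IsDomain A] [Algebra K A] (I : Ideal A) (hIne : I ≠ ⊥)
    (hcot : ∀ s : Finset A, (↑s : Set A) ⊆ (I : Set A) →
      ¬ (I : Set A) ⊆
        ↑(Submodule.restrictScalars K (I ^ 2 : Ideal A) ⊔ Submodule.span K (↑s : Set A))) :
    ¬ (Algebra.adjoin K (I : Set A)).FG := by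
  classical
  by_cases htop : (1 : A) ∈ I
  · intro _
    apply hcot ∅ (by simp)
    intro x _
    have hx2 : x ∈ (I ^ 2 : Ideal A) := by
      have h1 : (1 : A) ∈ (I ^ 2 : Ideal A) := by
        rw [sq]; simpa using Ideal.mul_mem_mul htop htop
      simpa using (I ^ 2 : Ideal A).mul_mem_left x h1
    exact Submodule.mem_sup_left hx2
  rintro ⟨s, hs⟩
  -- every element of adjoin K I is (algebraMap c) + h with h ∈ I
  have decomp : ∀ x ∈ Algebra.adjoin K (I : Set A),
      ∃ c : K, ∃ h ∈ I, x = algebraMap K A c + h := by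
    intro x hx
    induction hx using Algebra.adjoin_induction with
    | mem y hy => exact ⟨0, y, hy, by simp⟩
    | algebraMap r => exact ⟨r, 0, I.zero_mem, by simp⟩
    | add x y hx hy ihx ihy =>
        obtain ⟨c, h, hh, rfl⟩ := ihx
        obtain ⟨d, g, hg, rfl⟩ := ihy
        exact ⟨c + d, h + g, I.add_mem hh hg, by push_cast [map_add]; ring⟩
    | mul x y hx hy ihx ihy =>
        obtain ⟨c, h, hh, rfl⟩ := ihx
        obtain ⟨d, g, hg, rfl⟩ := ihy
        refine ⟨c * d, algebraMap K A c * g + algebraMap K A d * h + h * g, ?_, ?_⟩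
        · exact I.add_mem (I.add_mem (I.mul_mem_left _ hg) (I.mul_mem_left _ hh))
            (I.mul_mem_right _ hh)
        · rw [map_mul]; ring
  -- decompose the generators
  have hgen : ∀ g ∈ s, ∃ c : K, ∃ h ∈ I, g = algebraMap K A c + h := by
    intro g hg
    exact decomp g (hs ▸ Algebra.subset_adjoin hg)
  choose c h hhI hdec using hgen
  -- the shifted finite generating set, inside I
  let s' : Finset A := s.attach.image fun g => h g.1 g.2
  have hs'I : (↑s' : Set A) ⊆ (I : Set A) := by
    intro x hx
    simp only [s', Finset.coe_image, Set.mem_image] at hx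
    obtain ⟨g, _, rfl⟩ := hx
    exact hhI g.1 g.2
  apply hcot s' hs'I
  set M : Submodule K A :=
    Submodule.restrictScalars K (I ^ 2 : Ideal A) ⊔ Submodule.span K (↑s' : Set A) with hM
  have hMI : M ≤ Submodule.restrictScalars K I := by
    apply sup_le
    · intro x hx
      exact (Ideal.pow_le_self two_ne_zero) hx
    · rw [Submodule.span_le]
      exact hs'I
  -- every element of adjoin K s' is algebraMap c + m with m ∈ M
  have key : ∀ x ∈ Algebra.adjoin K (↑s' : Set A),
      ∃ d : K, x - algebraMap K A d ∈ M := by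
    intro x hx
    induction hx using Algebra.adjoin_induction with
    | mem y hy =>
        exact ⟨0, by simpa using Submodule.mem_sup_right (Submodule.subset_span hy)⟩
    | algebraMap r => exact ⟨r, by simp⟩
    | add x y hx hy ihx ihy =>
        obtain ⟨dx, hx'⟩ := ihx
        obtain ⟨dy, hy'⟩ := ihy
        refine ⟨dx + dy, ?_⟩
        have := M.add_mem hx' hy'
        rw [map_add]
        convert this using 1
        ring
    | mul x y hx hy ihx ihy =>
        obtain ⟨dx, hx'⟩ := ihx
        obtain ⟨dy, hy'⟩ := ihy
        refine ⟨dx * dy, ?_⟩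
        have h1 : algebraMap K A dx * (y - algebraMap K A dy) ∈ M := by
          rw [← Algebra.smul_def]
          exact M.smul_mem dx hy'
        have h2 : algebraMap K A dy * (x - algebraMap K A dx) ∈ M := by
          rw [← Algebra.smul_def]
          exact M.smul_mem dy hx'
        have h3 : (x - algebraMap K A dx) * (y - algebraMap K A dy) ∈ M := by
          apply Submodule.mem_sup_left
          have := Ideal.mul_mem_mul (hMI hx') (hMI hy')
          rwa [← sq] at this
        have := M.add_mem (M.add_mem h1 h2) h3
        convert this using 1
        rw [map_mul]
        ring
  -- conclude
  intro x hxI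
  have hx' : x ∈ Algebra.adjoin K (↑s' : Set A) := by
    have hxs : x ∈ Algebra.adjoin K (↑s : Set A) := hs ▸ Algebra.subset_adjoin hxI
    refine Algebra.adjoin_le ?_ hxs
    intro g hg
    have : g = algebraMap K A (c g hg) + h g hg := hdec g hg
    rw [this]
    exact Subalgebra.add_mem _ (Subalgebra.algebraMap_mem _ _)
      (Algebra.subset_adjoin (by
        simp only [s', Finset.coe_image, Set.mem_image]
        exact ⟨⟨g, hg⟩, by simp, rfl⟩))
  obtain ⟨d, hd⟩ := key x hx'
  have hdI : algebraMap K A d ∈ I := by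
    have hxm : x - algebraMap K A d ∈ I := hMI hd
    have := I.sub_mem hxI hxm
    simpa using this
  have hd0 : d = 0 := by
    by_contra hne
    apply htop
    have : algebraMap K A d⁻¹ * algebraMap K A d ∈ I := I.mul_mem_left _ hdI
    rwa [← map_mul, inv_mul_cancel₀ hne, map_one] at this
  rw [hd0, map_zero, sub_zero] at hd
  exact hd
end

section
/- If every K-subalgebra of a finitely generated commutative integral domain A over a field K is finitely generated, then the Krull dimension of A is at most 1. -/
open Polynomial

section Aux

variable {K : Type*} [Field K]

/-- The subalgebra of `K[X][X]` of polynomials `p = ∑ cₐ(Y) Xᵃ` such that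
`natDegree cₐ ≤ a * N` for all `a`. -/
def wtAlg (K : Type*) [Field K] (N : ℕ) : Subalgebra K (Polynomial (Polynomial K)) where
  carrier := {p | ∀ a : ℕ, (p.coeff a).natDegree ≤ a * N}
  add_mem' {p q} hp hq a := by
    rw [coeff_add]
    exact (natDegree_add_le _ _).trans (max_le (hp a) (hq a))
  zero_mem' a := by simp
  one_mem' a := by
    rcases eq_or_ne a 0 with rfl | ha
    · simp
    · simp [coeff_one, ha]
  mul_mem' {p q} hp hq a := by
    rw [coeff_mul]
    refine natDegree_sum_le_of_forall_le _ _ fun x hx => ?_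
    have hxa : x.1 + x.2 = a := Finset.HasAntidiagonal.mem_antidiagonal.1 hx
    calc (p.coeff x.1 * q.coeff x.2).natDegree
        ≤ (p.coeff x.1).natDegree + (q.coeff x.2).natDegree := natDegree_mul_le
      _ ≤ x.1 * N + x.2 * N := add_le_add (hp x.1) (hq x.2)
      _ = a * N := by rw [← add_mul, hxa]
  algebraMap_mem' k a := by
    rcases eq_or_ne a 0 with rfl | ha
    · simp
    · simp [Polynomial.algebraMap_apply, coeff_C, ha]

lemma g_mem_wtAlg (N n : ℕ) (hn : n ≤ N) :
    (C (X ^ n) * X : Polynomial (Polynomial K)) ∈ wtAlg K N := by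
  intro a
  rcases eq_or_ne a 1 with rfl | ha
  · rw [coeff_C_mul, coeff_X_one, mul_one, natDegree_X_pow]
    omega
  · rw [coeff_C_mul, coeff_X, if_neg (fun h => ha h.symm), mul_zero]
    simp

lemma g_notMem_wtAlg (N : ℕ) :
    (C (X ^ (N + 1)) * X : Polynomial (Polynomial K)) ∉ wtAlg K N := by
  intro h
  have := h 1
  rw [coeff_C_mul, coeff_X_one, mul_one, natDegree_X_pow] at this
  omega

/-- Any element of the adjoin of the range lies in a finite stage. -/
lemma mem_stage {K A : Type*} [CommSemiring K] [CommSemiring A] [Algebra K A]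
    (f : ℕ → A) {a : A} (ha : a ∈ Algebra.adjoin K (Set.range f)) :
    ∃ N : ℕ, a ∈ Algebra.adjoin K (f '' Set.Iic N) := by
  induction ha using Algebra.adjoin_induction with
  | mem x hx =>
    obtain ⟨n, rfl⟩ := hx
    exact ⟨n, Algebra.subset_adjoin ⟨n, Set.mem_Iic.2 le_rfl, rfl⟩⟩
  | algebraMap r => exact ⟨0, Subalgebra.algebraMap_mem _ r⟩
  | add x y hx hy ihx ihy =>
    obtain ⟨N₁, h₁⟩ := ihx
    obtain ⟨N₂, h₂⟩ := ihy
    refine ⟨N₁ ⊔ N₂, add_mem ?_ ?_⟩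
    · exact Algebra.adjoin_mono (Set.image_mono (Set.Iic_subset_Iic.2 le_sup_left)) h₁
    · exact Algebra.adjoin_mono (Set.image_mono (Set.Iic_subset_Iic.2 le_sup_right)) h₂
  | mul x y hx hy ihx ihy =>
    obtain ⟨N₁, h₁⟩ := ihx
    obtain ⟨N₂, h₂⟩ := ihy
    refine ⟨N₁ ⊔ N₂, mul_mem ?_ ?_⟩
    · exact Algebra.adjoin_mono (Set.image_mono (Set.Iic_subset_Iic.2 le_sup_left)) h₁
    · exact Algebra.adjoin_mono (Set.image_mono (Set.Iic_subset_Iic.2 le_sup_right)) h₂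

/-- Step 1: if all subalgebras are f.g., then any two elements satisfy a nontrivial
polynomial relation. -/
lemma exists_rel {K A : Type*} [Field K] [CommRing A] [IsDomain A] [Algebra K A]
    (h : ∀ B : Subalgebra K A, B.FG) (x y : A) :
    ∃ p : Polynomial (Polynomial K), p ≠ 0 ∧
      Polynomial.eval₂ ((Polynomial.aeval y : Polynomial K →ₐ[K] A) : Polynomial K →+* A) x p
        = 0 := by
  by_contra hcon
  push_neg at hcon
  have hinj : Function.Injective (aevalTower (Polynomial.aeval y) x :
      Polynomial (Polynomial K) →ₐ[K] A) := by
    rw [injective_iff_map_eq_zero]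
    intro p hp
    by_contra h0
    exact hcon p h0 hp
  have hΦg : ∀ n : ℕ, (aevalTower (Polynomial.aeval y) x : Polynomial (Polynomial K) →ₐ[K] A)
      (C (X ^ n) * X) = y ^ n * x := by
    intro n
    rw [map_mul, aevalTower_C, aevalTower_X, map_pow, Polynomial.aeval_X]
  obtain ⟨t, ht⟩ := h (Algebra.adjoin K (Set.range fun n : ℕ => y ^ n * x))
  have key : ∀ a : A, a ∈ t →
      ∃ N : ℕ, a ∈ Algebra.adjoin K ((fun n : ℕ => y ^ n * x) '' Set.Iic N) := by
    intro a ha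
    exact mem_stage _ (ht ▸ Algebra.subset_adjoin ha)
  choose! N hN using key
  set M := t.sup N with hM
  have hBle : Algebra.adjoin K (Set.range fun n : ℕ => y ^ n * x)
      ≤ Algebra.adjoin K ((fun n : ℕ => y ^ n * x) '' Set.Iic M) := by
    rw [← ht]
    refine Algebra.adjoin_le ?_
    intro a ha
    exact Algebra.adjoin_mono (Set.image_mono (Set.Iic_subset_Iic.2 (Finset.le_sup ha)))
      (hN a ha)
  have hmem : y ^ (M + 1) * x
      ∈ Algebra.adjoin K ((fun n : ℕ => y ^ n * x) '' Set.Iic M) :=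
    hBle (Algebra.subset_adjoin ⟨M + 1, rfl⟩)
  have himg : (fun n : ℕ => y ^ n * x) '' Set.Iic M
      = ⇑(aevalTower (Polynomial.aeval y) x : Polynomial (Polynomial K) →ₐ[K] A)
        '' ((fun n : ℕ => (C (X ^ n) * X : Polynomial (Polynomial K))) '' Set.Iic M) := by
    rw [Set.image_image]
    exact (Set.image_congr fun n _ => (hΦg n).symm)
  rw [himg, ← AlgHom.map_adjoin, Subalgebra.mem_map] at hmem
  obtain ⟨q, hq, hqe⟩ := hmem
  have hqg : q = C (X ^ (M + 1)) * X := hinj (by rw [hqe, hΦg])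
  subst hqg
  have hle : Algebra.adjoin K ((fun n : ℕ => (C (X ^ n) * X : Polynomial (Polynomial K)))
      '' Set.Iic M) ≤ wtAlg K M := by
    refine Algebra.adjoin_le ?_
    rintro p ⟨n, hn, rfl⟩
    exact g_mem_wtAlg M n hn
  exact g_notMem_wtAlg M (hle hq)

/-- Strip powers of `X` off a relation to get one with nonzero constant coefficient. -/
lemma strip {K A : Type*} [Field K] [CommRing A] [IsDomain A]
    (f : Polynomial K →+* A) (x : A) (hx : x ≠ 0) :
    ∀ n (p : Polynomial (Polynomial K)), p.natDegree ≤ n → p ≠ 0 → p.eval₂ f x = 0 →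
      ∃ q : Polynomial (Polynomial K), q.coeff 0 ≠ 0 ∧ q.eval₂ f x = 0 := by
  intro n
  induction n with
  | zero =>
    intro p hd hp h0
    refine ⟨p, fun hc => hp ?_, h0⟩
    have := Polynomial.eq_C_of_natDegree_le_zero hd
    rw [this, hc, map_zero]
  | succ n ih =>
    intro p hd hp h0
    by_cases hc : p.coeff 0 = 0
    · obtain ⟨q, rfl⟩ := Polynomial.X_dvd_iff.2 hc
      have hq : q ≠ 0 := by rintro rfl; simp at hp
      have hxq : x * q.eval₂ f x = 0 := by
        rw [← h0, eval₂_mul, eval₂_X]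
      have hqe : q.eval₂ f x = 0 := by
        rcases mul_eq_zero.1 hxq with h | h
        · exact absurd h hx
        · exact h
      refine ih q ?_ hq hqe
      have hdeg : (X * q).natDegree = 1 + q.natDegree := by
        rw [natDegree_mul X_ne_zero hq, natDegree_X]
      omega
    · exact ⟨p, hc, h0⟩

end Aux

/-- If every `K`-subalgebra of a finitely generated commutative integral domain `A` over an
algebraically closed field `K` of characteristic zero is finitely generated, then the Krull
dimension of `A` is at most 1. -/
theorem krullDim_le_one_of_all_subalgebras_fg {K A : Type*} [Field K] [IsAlgClosed K]
    [CharZero K] [CommRing A] [IsDomain A] [Algebra K A] (hFT : Algebra.FiniteType K A)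
    (h : ∀ B : Subalgebra K A, B.FG) : ringKrullDim A ≤ 1 := by
  show (⨆ p : LTSeries (PrimeSpectrum A), (p.length : WithBot ℕ∞)) ≤ 1
  refine iSup_le fun p => ?_
  suffices h2 : p.length ≤ 1 by exact_mod_cast h2
  by_contra hlen
  push_neg at hlen
  have hlen2 : 2 ≤ p.length := hlen
  let i0 : Fin (p.length + 1) := ⟨0, by omega⟩
  let i1 : Fin (p.length + 1) := ⟨1, by omega⟩
  let i2 : Fin (p.length + 1) := ⟨2, by omega⟩
  have h01 : p i0 < p i1 := p.strictMono (Fin.mk_lt_mk.2 (by omega))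
  have h12 : p i1 < p i2 := p.strictMono (Fin.mk_lt_mk.2 (by omega))
  set P0 := (p i0).asIdeal with hP0
  set P1 := (p i1).asIdeal with hP1
  set P2 := (p i2).asIdeal with hP2
  have h01' : P0 < P1 := (PrimeSpectrum.asIdeal_lt_asIdeal _ _).2 h01
  have h12' : P1 < P2 := (PrimeSpectrum.asIdeal_lt_asIdeal _ _).2 h12
  obtain ⟨x, hx1, hx0⟩ := SetLike.exists_of_lt h01'
  have hxne : x ≠ 0 := fun hx => hx0 (by rw [hx]; exact P0.zero_mem)
  haveI : P1.IsPrime := (p i1).isPrime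
  have hint : Algebra.IsIntegral K (A ⧸ P1) := by
    refine ⟨fun z => ?_⟩
    obtain ⟨a, rfl⟩ := Ideal.Quotient.mk_surjective z
    obtain ⟨r, hr0, hrev⟩ := exists_rel h x a
    obtain ⟨q, hq0, hqev⟩ :=
      strip ((Polynomial.aeval a : Polynomial K →ₐ[K] A) : Polynomial K →+* A) x hxne
        r.natDegree r le_rfl hr0 hrev
    have hmap := congrArg (Ideal.Quotient.mk P1) hqev
    rw [map_zero, Polynomial.hom_eval₂] at hmap
    rw [show Ideal.Quotient.mk P1 x = 0 from Ideal.Quotient.eq_zero_iff_mem.2 hx1] at hmap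
    rw [Polynomial.eval₂_at_zero] at hmap
    have halg : Polynomial.aeval (Ideal.Quotient.mk P1 a) (q.coeff 0) = 0 := by
      have : Polynomial.aeval ((Ideal.Quotient.mkₐ K P1) a) (q.coeff 0)
          = (Ideal.Quotient.mkₐ K P1) (Polynomial.aeval a (q.coeff 0)) :=
        Polynomial.aeval_algHom_apply _ _ _
      rw [Ideal.Quotient.mkₐ_eq_mk] at this
      rw [this]
      exact hmap
    exact IsAlgebraic.isIntegral ⟨q.coeff 0, hq0, halg⟩
  have hfield : IsField (A ⧸ P1) := isField_of_isIntegral_of_isField' (Field.toIsField K)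
  have hmax : P1.IsMaximal := Ideal.Quotient.maximal_of_isField _ hfield
  have heq : P1 = P2 := hmax.eq_of_le (p i2).isPrime.ne_top (le_of_lt h12')
  exact (ne_of_lt h12') heq
end

section
/- Let L be a submonoid of ℤ^r that is saturated (if nχ ∈ L for some n ≥ 1 then χ ∈ L) and finitely generated. Then L equals the intersection of ℤ^r with the rational convex cone generated by L, i.e., L = ℤ^r ∩ ℚ_{≥0}·L. -/
/-- Let `L` be a saturated, finitely generated submonoid of `ℤ^r`.  Then `L` equals the
intersection of `ℤ^r` with the rational convex cone generated by `L`:  a lattice vector `v`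
lies in `L` iff `v` is a finite nonnegative rational combination of elements of `L`. -/
theorem saturated_submonoid_eq_cone_inter_lattice (r : ℕ) (L : AddSubmonoid (Fin r → ℤ))
    (hfg : L.FG)
    (hsat : ∀ (v : Fin r → ℤ) (n : ℕ), 0 < n → n • v ∈ L → v ∈ L) :
    ∀ v : Fin r → ℤ, v ∈ L ↔
      ∃ (s : Finset (Fin r → ℤ)) (c : (Fin r → ℤ) → ℚ),
        (∀ x ∈ s, x ∈ L) ∧ (∀ x ∈ s, 0 ≤ c x) ∧
        ∀ i, (v i : ℚ) = ∑ x ∈ s, c x * (x i : ℚ) := by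
  intro v
  constructor
  · intro hv
    exact ⟨{v}, fun _ => 1, by simpa using hv, by simp, by simp⟩
  · rintro ⟨s, c, hsL, hc, hsum⟩
    -- common denominator
    set N : ℕ := ∏ x ∈ s, (c x).den with hN
    have hNpos : 0 < N := Finset.prod_pos (fun x _ => (c x).pos)
    have hden : ∀ x ∈ s, (c x).den ∣ N := fun x hx => Finset.dvd_prod_of_mem _ hx
    -- integer coefficients
    set m : (Fin r → ℤ) → ℤ := fun x => ((N / (c x).den : ℕ) : ℤ) * (c x).num with hm
    have hmval : ∀ x ∈ s, ((m x : ℚ)) = (N : ℚ) * c x := by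
      intro x hx
      have h1 : ((N / (c x).den : ℕ) : ℚ) * (c x).den = (N : ℚ) := by
        rw [← Nat.cast_mul, Nat.div_mul_cancel (hden x hx)]
      have h2 : (c x) * ((c x).den : ℚ) = (c x).num := Rat.mul_den_eq_num _
      rw [hm]
      rw [Int.cast_mul, Int.cast_natCast, ← h2, ← mul_assoc, mul_right_comm, h1]
    have hmnn : ∀ x ∈ s, 0 ≤ m x := by
      intro x hx
      exact mul_nonneg (Int.natCast_nonneg _) (Rat.num_nonneg.mpr (hc x hx))
    -- N • v = ∑ (m x).toNat • x
    have hkey : N • v = ∑ x ∈ s, (m x).toNat • x := by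
      funext i
      have h2 : ((N • v) i : ℚ) = ((∑ x ∈ s, (m x).toNat • x) i : ℚ) := by
        simp only [Pi.smul_apply, Finset.sum_apply, nsmul_eq_mul, Pi.mul_apply, Pi.natCast_apply]
        push_cast
        rw [hsum i, Finset.mul_sum]
        refine Finset.sum_congr rfl fun x hx => ?_
        have h3 : (((m x).toNat : ℤ) : ℚ) = (m x : ℚ) := by
          rw [Int.toNat_of_nonneg (hmnn x hx)]
        push_cast at h3
        rw [h3, hmval x hx]
        ring
      exact_mod_cast h2
    have hNv : N • v ∈ L := by
      rw [hkey]
      exact AddSubmonoid.sum_mem L fun x hx => AddSubmonoid.nsmul_mem L (hsL x hx) _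
    exact hsat v N hNpos hNv
end

section
/- Let A be a commutative ring with an action of a group G by ring automorphisms, and let rad(A) be the nilradical of A. Then every G-invariant subring of A is finitely generated (as an algebra over a field K ⊆ A^G) if and only if every G-invariant subring of A/rad(A) is finitely generated and rad(A) is finite-dimensional over K. -/
/-- Let a group `G` act on a commutative `K`-algebra `A` by `K`-algebra automorphisms, and let
`rad A = nilradical A` be the ideal of nilpotents (which is `G`-stable), with the induced
`G`-action on `A/rad A`.  Then every `G`-invariant `K`-subalgebra of `A` is finitely generated
if and only if every `G`-invariant `K`-subalgebra of `A/rad A` is finitely generated and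
`rad A` is finite-dimensional over `K`. -/
theorem invariant_subalgebras_fg_iff_quotient_nilradical {K A G : Type*} [Field K] [CommRing A]
    [Algebra K A] [Group G] [MulSemiringAction G A] [SMulCommClass G K A]
    [MulSemiringAction G (A ⧸ nilradical A)] [SMulCommClass G K (A ⧸ nilradical A)]
    (hequiv : ∀ (g : G) (a : A),
      Ideal.Quotient.mk (nilradical A) (g • a) = g • Ideal.Quotient.mk (nilradical A) a) :
    (∀ B : Subalgebra K A, (∀ g : G, ∀ x ∈ B, g • x ∈ B) → B.FG) ↔
      ((∀ B : Subalgebra K (A ⧸ nilradical A), (∀ g : G, ∀ x ∈ B, g • x ∈ B) → B.FG) ∧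
        Module.Finite K (Submodule.restrictScalars K (nilradical A))) := by
  set π := Ideal.Quotient.mkₐ K (nilradical A) with hπ
  have hπ' : ∀ a : A, π a = Ideal.Quotient.mk (nilradical A) a := fun a => rfl
  have hnil : ∀ (g : G), ∀ a ∈ nilradical A, g • a ∈ nilradical A := by
    intro g a ha
    rw [mem_nilradical] at ha ⊢
    obtain ⟨n, hn⟩ := ha
    exact ⟨n, by rw [← smul_pow', hn, smul_zero]⟩
  constructor
  · intro h
    constructor
    · intro B hB
      have hB' : ∀ g : G, ∀ x ∈ B.comap π, g • x ∈ B.comap π := by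
        intro g x hx
        simp only [Subalgebra.mem_comap, hπ', hequiv] at hx ⊢
        exact hB g _ hx
      have hfg := (h _ hB').map π
      rwa [Subalgebra.map_comap_eq_self_of_surjective Ideal.Quotient.mk_surjective] at hfg
    · set B := Algebra.adjoin K (nilradical A : Set A) with hBdef
      have hBG : ∀ g : G, ∀ x ∈ B, g • x ∈ B := by
        intro g x hx
        have hx' : g • x ∈ B.map (MulSemiringAction.toAlgHom K A g) :=
          Subalgebra.mem_map.mpr ⟨x, hx, rfl⟩
        rw [hBdef, AlgHom.map_adjoin] at hx'
        refine Algebra.adjoin_mono ?_ hx'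
        rintro y ⟨a, ha, rfl⟩
        exact hnil g a ha
      have hint : B ≤ integralClosure K A := by
        rw [hBdef]
        refine Algebra.adjoin_le ?_
        intro x hx
        obtain ⟨n, hn⟩ := mem_nilradical.mp hx
        exact ⟨Polynomial.X ^ n, Polynomial.monic_X_pow n, by simp [hn]⟩
      haveI : Algebra.IsIntegral K B := le_integralClosure_iff_isIntegral.mp hint
      haveI : Algebra.FiniteType K B := (Subalgebra.fg_iff_finiteType B).mp (h B hBG)
      haveI : Module.Finite K B := Algebra.IsIntegral.finite
      haveI : FiniteDimensional K (Subalgebra.toSubmodule B) :=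
        inferInstanceAs (Module.Finite K B)
      exact Submodule.finiteDimensional_of_le (S₂ := Subalgebra.toSubmodule B)
        (fun x hx => Algebra.subset_adjoin hx)
  · rintro ⟨hq, hfin⟩ B hB
    have hBbar : ∀ g : G, ∀ x ∈ B.map π, g • x ∈ B.map π := by
      rintro g x ⟨b, hb, rfl⟩
      exact ⟨g • b, hB g b hb, hequiv g b⟩
    obtain ⟨s, hsfin, hs⟩ := Subalgebra.fg_def.mp (hq _ hBbar)
    have hssub : s ⊆ (B.map π : Set _) := hs ▸ Algebra.subset_adjoin
    choose f hfB hfπ using fun x : s => Subalgebra.mem_map.mp (hssub x.2)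
    haveI : Finite s := hsfin
    set N' : Submodule K A :=
      Subalgebra.toSubmodule B ⊓ Submodule.restrictScalars K (nilradical A) with hN'
    haveI : FiniteDimensional K N' := Submodule.finiteDimensional_of_le inf_le_right
    obtain ⟨z, hzfin, hz⟩ := Submodule.fg_def.mp (Module.Finite.iff_fg.mp ‹_›)
    refine Subalgebra.fg_def.mpr ⟨Set.range f ∪ z,
      (Set.finite_range f).union hzfin, le_antisymm ?_ ?_⟩
    · refine Algebra.adjoin_le ?_
      rintro x (⟨i, rfl⟩ | hx)
      · exact hfB i
      · exact (hz ▸ Submodule.subset_span hx : x ∈ N').1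
    · intro b hb
      have hπim : π '' Set.range f = s := by
        rw [← Set.range_comp]
        convert Subtype.range_coe (s := s) using 2
        ext x
        exact hfπ x
      have hbmem : π b ∈ (Algebra.adjoin K (Set.range f)).map π := by
        rw [AlgHom.map_adjoin, hπim, hs]
        exact ⟨b, hb, rfl⟩
      obtain ⟨c, hc, hcb⟩ := Subalgebra.mem_map.mp hbmem
      have hcB : c ∈ B :=
        Algebra.adjoin_le (Set.range_subset_iff.mpr fun i => hfB i) hc
      have hdiff : b - c ∈ N' := by
        refine ⟨sub_mem hb hcB, ?_⟩
        have : c - b ∈ nilradical A := Ideal.Quotient.eq.mp hcb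
        simpa using neg_mem this
      have h1 : c ∈ Algebra.adjoin K (Set.range f ∪ z) :=
        Algebra.adjoin_mono Set.subset_union_left hc
      have h2 : b - c ∈ Algebra.adjoin K (Set.range f ∪ z) := by
        have hsp : Submodule.span K z ≤
            Subalgebra.toSubmodule (Algebra.adjoin K (Set.range f ∪ z)) :=
          Submodule.span_le.mpr fun x hx =>
            Algebra.subset_adjoin (Set.mem_union_right _ hx)
        exact hsp (hz ▸ hdiff)
      have hsum := add_mem h1 h2
      rwa [add_sub_cancel] at hsum
end

section
/- Let K be an algebraically closed field, V a finite-dimensional K-vector space, and M ⊆ End(V) a submonoid that is closed in the Zariski topology and contains the identity. Then the set G(M) of invertible elements of M is open in M. -/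
/-! If `A ∈ M` is invertible, the substitution `φ : p(X) ↦ p(A X)` maps the ideal `I` of
polynomials vanishing on `M` into itself, because `A M ⊆ M`. Since `φ` is an automorphism of a
Noetherian ring, the ascending chain `I ⊆ φ⁻¹ I ⊆ φ⁻² I ⊆ ⋯` stabilises, so `φ⁻¹ I = I`. Hence
every `p ∈ I` vanishes at `A⁻¹ = A⁻¹ · 1`, and `A⁻¹ ∈ M` because `M` is closed. The units of `M`
are therefore the elements of `M` off the closed set `det = 0`. -/

/-- A subset of the space of `n × n` matrices over `K` is Zariski closed if it is the common
zero locus of a set of polynomials in the matrix entries. -/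
def IsZariskiClosedMatrixSet {K : Type*} [Field K] (n : ℕ)
    (C : Set (Matrix (Fin n) (Fin n) K)) : Prop :=
  ∃ P : Set (MvPolynomial (Fin n × Fin n) K),
    C = {A | ∀ p ∈ P, MvPolynomial.eval (fun ij => A ij.1 ij.2) p = 0}

open MvPolynomial

theorem StrictMono.apply_eq_of_le_apply {α : Type*} [PartialOrder α] [WellFoundedGT α]
    {f : α → α} (hf : StrictMono f) {x : α} (hx : x ≤ f x) : f x = x := by
  by_contra hne
  have hlt : x < f x := hx.lt_of_ne (Ne.symm hne)
  refine not_strictMono_of_wellFoundedGT (fun k => f^[k] x) (strictMono_nat_of_lt_succ fun k => ?_)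
  simpa only [Function.iterate_succ_apply] using hf.iterate k hlt

theorem Ideal.comap_eq_self_of_le_comap {R : Type*} [CommRing R] [IsNoetherianRing R]
    {φ : R →+* R} (hφ : Function.Surjective φ) {I : Ideal R} (h : I ≤ I.comap φ) :
    I.comap φ = I :=
  have hmono : Monotone (Ideal.comap φ) := fun _ _ => Ideal.comap_mono
  (hmono.strictMono_of_injective (Ideal.comap_injective_of_surjective φ hφ)).apply_eq_of_le_apply
    h

section LeftMulSubst

variable {R : Type*} [CommRing R] {m n : Type*} [Fintype m]

/-- The substitution `p(X) ↦ p(B X)` in the entries of an `m × n` matrix of variables `X`. -/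
noncomputable def leftMulSubst (B : Matrix m m R) :
    MvPolynomial (m × n) R →ₐ[R] MvPolynomial (m × n) R :=
  bind₁ fun ij => ∑ l, C (B ij.1 l) * X (l, ij.2)

theorem eval_leftMulSubst (B : Matrix m m R) (Y : Matrix m n R) (p : MvPolynomial (m × n) R) :
    eval (fun ij => Y ij.1 ij.2) (leftMulSubst B p) = eval (fun ij => (B * Y) ij.1 ij.2) p := by
  change aeval _ (bind₁ _ p) = aeval _ p
  rw [aeval_bind₁]
  congr 1
  ext ⟨i, j⟩
  simp [Matrix.mul_apply]

theorem leftMulSubst_leftMulSubst (A B : Matrix m m R) (p : MvPolynomial (m × n) R) :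
    leftMulSubst A (leftMulSubst B p) = leftMulSubst (B * A) p := by
  simp only [leftMulSubst, bind₁_bind₁]
  congr 1
  ext ⟨i, j⟩ : 1
  simp only [bind₁_X_right, map_sum, map_mul, bind₁_C_right, Matrix.mul_apply, Finset.mul_sum,
    Finset.sum_mul, mul_assoc]
  exact Finset.sum_comm

theorem leftMulSubst_one [DecidableEq m] :
    (leftMulSubst 1 : MvPolynomial (m × n) R →ₐ[R] MvPolynomial (m × n) R) =
      AlgHom.id R (MvPolynomial (m × n) R) := by
  ext ⟨i, j⟩ : 1
  simp [leftMulSubst, Matrix.one_apply]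

theorem leftMulSubst_surjective [DecidableEq m] {A : Matrix m m R} (hA : IsUnit A.det) :
    Function.Surjective (leftMulSubst (n := n) A) := fun p =>
  ⟨leftMulSubst A⁻¹ p, by rw [leftMulSubst_leftMulSubst, Matrix.nonsing_inv_mul A hA,
    leftMulSubst_one, AlgHom.id_apply]⟩

end LeftMulSubst

section MatrixSets

variable {K : Type*} [Field K] {n : ℕ}

noncomputable def matrixVanishingIdeal (S : Set (Matrix (Fin n) (Fin n) K)) :
    Ideal (MvPolynomial (Fin n × Fin n) K) :=
  vanishingIdeal K ((fun X ij => X ij.1 ij.2) '' S)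

theorem mem_matrixVanishingIdeal {S : Set (Matrix (Fin n) (Fin n) K)}
    {p : MvPolynomial (Fin n × Fin n) K} :
    p ∈ matrixVanishingIdeal S ↔ ∀ X ∈ S, eval (fun ij => X ij.1 ij.2) p = 0 := by
  simp [matrixVanishingIdeal]

theorem IsZariskiClosedMatrixSet.mem_of_forall_eval_eq_zero {C : Set (Matrix (Fin n) (Fin n) K)}
    (hC : IsZariskiClosedMatrixSet n C) {A : Matrix (Fin n) (Fin n) K}
    (hA : ∀ p ∈ matrixVanishingIdeal C, eval (fun ij => A ij.1 ij.2) p = 0) : A ∈ C := by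
  obtain ⟨P, rfl⟩ := hC
  exact fun p hp => hA p (mem_matrixVanishingIdeal.mpr fun X hX => hX p hp)

variable (K n) in
theorem isZariskiClosedMatrixSet_det_eq_zero :
    IsZariskiClosedMatrixSet n {A : Matrix (Fin n) (Fin n) K | A.det = 0} := by
  refine ⟨{(Matrix.mvPolynomialX (Fin n) (Fin n) K).det}, ?_⟩
  ext A
  simp only [Set.mem_ofPred_eq, Set.mem_singleton_iff, forall_eq]
  rw [RingHom.map_det, Matrix.mvPolynomialX_mapMatrix_eval]

theorem Submonoid.nonsing_inv_mem_of_isZariskiClosed {M : Submonoid (Matrix (Fin n) (Fin n) K)}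
    (hM : IsZariskiClosedMatrixSet n (M : Set (Matrix (Fin n) (Fin n) K)))
    {A : Matrix (Fin n) (Fin n) K} (hA : A ∈ M) (hdet : IsUnit A.det) : A⁻¹ ∈ M := by
  set I := matrixVanishingIdeal (M : Set (Matrix (Fin n) (Fin n) K))
  have hsurj := leftMulSubst_surjective (n := Fin n) hdet
  have hI : I ≤ I.comap (leftMulSubst A) := fun p hp =>
    mem_matrixVanishingIdeal.mpr fun X hX =>
      (eval_leftMulSubst A X p).trans (mem_matrixVanishingIdeal.mp hp _ (M.mul_mem hA hX))
  have hfix : I.comap (leftMulSubst A) = I :=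
    Ideal.comap_eq_self_of_le_comap (φ := (leftMulSubst A).toRingHom) hsurj hI
  refine hM.mem_of_forall_eval_eq_zero fun p hp => ?_
  obtain ⟨q, rfl⟩ := hsurj p
  have hq : q ∈ I := hfix ▸ hp
  rw [eval_leftMulSubst, Matrix.mul_nonsing_inv A hdet]
  exact mem_matrixVanishingIdeal.mp hq 1 M.one_mem

end MatrixSets

theorem units_open_in_closed_submonoid_general {K : Type*} [Field K] (n : ℕ)
    (M : Submonoid (Matrix (Fin n) (Fin n) K))
    (hM : IsZariskiClosedMatrixSet n (M : Set (Matrix (Fin n) (Fin n) K))) :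
    ∃ C : Set (Matrix (Fin n) (Fin n) K), IsZariskiClosedMatrixSet n C ∧
      {A : Matrix (Fin n) (Fin n) K | A ∈ M ∧ ∃ B ∈ M, A * B = 1 ∧ B * A = 1} =
        (M : Set (Matrix (Fin n) (Fin n) K)) \ C := by
  refine ⟨{A | A.det = 0}, isZariskiClosedMatrixSet_det_eq_zero K n, ?_⟩
  ext A
  simp only [Set.mem_ofPred_eq, Set.mem_sdiff, SetLike.mem_coe, and_congr_right_iff]
  intro hA
  constructor
  · rintro ⟨B, -, hAB, -⟩
    exact (Matrix.isUnit_det_of_right_inverse hAB).ne_zero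
  · intro hdet
    have hunit : IsUnit A.det := isUnit_iff_ne_zero.mpr hdet
    exact ⟨A⁻¹, M.nonsing_inv_mem_of_isZariskiClosed hM hA hunit,
      Matrix.mul_nonsing_inv A hunit, Matrix.nonsing_inv_mul A hunit⟩

/-- Let `K` be an algebraically closed field and `M ⊆ End(V) = Matrix n n K` a Zariski-closed
submonoid containing the identity.  Then the set `G(M)` of invertible elements of `M` is open
in `M`: its complement in `M` is the intersection of `M` with a Zariski-closed set. -/
theorem units_open_in_closed_submonoid {K : Type*} [Field K] [IsAlgClosed K] (n : ℕ)
    (M : Submonoid (Matrix (Fin n) (Fin n) K))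
    (hM : IsZariskiClosedMatrixSet n (M : Set (Matrix (Fin n) (Fin n) K))) :
    ∃ C : Set (Matrix (Fin n) (Fin n) K), IsZariskiClosedMatrixSet n C ∧
      {A : Matrix (Fin n) (Fin n) K | A ∈ M ∧ ∃ B ∈ M, A * B = 1 ∧ B * A = 1} =
        (M : Set (Matrix (Fin n) (Fin n) K)) \ C :=
  units_open_in_closed_submonoid_general n M hM
end
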